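/- arXiv:1908.02459 — 5 statements merged into one kernel-verified Lean document; each statement's English description precedes it below -/
import Mathlib

section
/- Let β ∈ ℝ, let ω₂ : ℝ → ℂ be differentiable, let U ⊆ ℂ be open with U + ω₂(t) ⊆ U, and let f : ℝ × U → ℂ be differentiable as a function of (t, z) ∈ ℝ × ℂ and holomorphic in z for each fixed t. Suppose f(t, z + ω₂(t)) = e^{2iβ} f(t, z) for all t ∈ ℝ and z ∈ U. Define h(t, z) = ∂_t f(t, z) / ∂_z f(t, z). Then for every t and every z ∈ U with ∂_z f(t, z) ≠ 0, one has ∂_z f(t, z + ω₂(t)) = e^{2iβ} ∂_z f(t, z) ≠ 0 and h(t, z + ω₂(t)) − h(t, z) = −ω̇₂(t), where ω̇₂(t) is the derivative of ω₂ at t. -/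
noncomputable section

open Complex Topology Filter

/-- The period lattice generated by `ω₁` and `ω₂`. -/
def lattice (ω₁ ω₂ : ℂ) : Set ℂ := {z : ℂ | ∃ m n : ℤ, z = m * ω₁ + n * ω₂}

/-- The lattice point corresponding to a pair of integers. -/
def latPt (ω₁ ω₂ : ℂ) (p : ℤ × ℤ) : ℂ := (p.1 : ℂ) * ω₁ + (p.2 : ℂ) * ω₂

/-- The Weierstrass zeta function of the lattice generated by `ω₁, ω₂`. -/
def wzeta (ω₁ ω₂ z : ℂ) : ℂ :=
  z⁻¹ + ∑' p : {p : ℤ × ℤ // p ≠ 0},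
    ((z - latPt ω₁ ω₂ p.1)⁻¹ + (latPt ω₁ ω₂ p.1)⁻¹ + z / (latPt ω₁ ω₂ p.1) ^ 2)

/-- The Weierstrass ℘-function of the lattice generated by `ω₁, ω₂`. -/
def wp (ω₁ ω₂ : ℂ) (z : ℂ) : ℂ :=
  (z ^ 2)⁻¹ + ∑' p : {p : ℤ × ℤ // p ≠ 0},
    (((z - latPt ω₁ ω₂ p.1) ^ 2)⁻¹ - ((latPt ω₁ ω₂ p.1) ^ 2)⁻¹)

/-- The first Weierstrass invariant `g₂`. -/
def g2 (ω₁ ω₂ : ℂ) : ℂ :=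
  60 * ∑' p : {p : ℤ × ℤ // p ≠ 0}, ((latPt ω₁ ω₂ p.1) ^ 4)⁻¹

/-- The Weierstrass sigma function of the lattice generated by `ω₁, ω₂`. -/
def wsigma (ω₁ ω₂ z : ℂ) : ℂ :=
  z * ∏' p : {p : ℤ × ℤ // p ≠ 0},
    ((1 - z / latPt ω₁ ω₂ p.1) *
      Complex.exp (z / latPt ω₁ ω₂ p.1 + z ^ 2 / (2 * (latPt ω₁ ω₂ p.1) ^ 2)))

/-- Quasi-periodicity of a one-parametric family along the moving period `ω₂(t)` gives
`h(t, z + ω₂(t)) - h(t, z) = -ω̇₂(t)` for `h = ∂ₜf / ∂_z f`. -/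
theorem stmt6 (β : ℝ) (ω₂ : ℝ → ℂ) (hω : Differentiable ℝ ω₂)
    (U : Set ℂ) (hU : IsOpen U) (hUω : ∀ t : ℝ, ∀ z ∈ U, z + ω₂ t ∈ U)
    (f : ℝ × ℂ → ℂ) (hf : Differentiable ℝ f)
    (hol : ∀ t : ℝ, DifferentiableOn ℂ (fun z => f (t, z)) U)
    (hper : ∀ t : ℝ, ∀ z ∈ U,
      f (t, z + ω₂ t) = Complex.exp (2 * Complex.I * (β : ℂ)) * f (t, z)) :
    ∀ t : ℝ, ∀ z ∈ U, deriv (fun w => f (t, w)) z ≠ 0 →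
      (deriv (fun w => f (t, w)) (z + ω₂ t) =
          Complex.exp (2 * Complex.I * (β : ℂ)) * deriv (fun w => f (t, w)) z ∧
        deriv (fun w => f (t, w)) (z + ω₂ t) ≠ 0 ∧
        deriv (fun s => f (s, z + ω₂ t)) t / deriv (fun w => f (t, w)) (z + ω₂ t) -
            deriv (fun s => f (s, z)) t / deriv (fun w => f (t, w)) z =
          -(deriv ω₂ t)) := by
  intro t z hz hd
  set e := Complex.exp (2 * Complex.I * (β : ℂ)) with he
  have hene : e ≠ 0 := Complex.exp_ne_zero _
  have hzω : z + ω₂ t ∈ U := hUω t z hz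
  have hft : ∀ w ∈ U, DifferentiableAt ℂ (fun w => f (t, w)) w := fun w hw =>
    (hol t w hw).differentiableAt (hU.mem_nhds hw)
  -- Part 1
  have h1 : deriv (fun w => f (t, w)) (z + ω₂ t) = e * deriv (fun w => f (t, w)) z := by
    have heq : (fun w => f (t, w + ω₂ t)) =ᶠ[𝓝 z] (fun w => e * f (t, w)) := by
      filter_upwards [hU.mem_nhds hz] with w hw using hper t w hw
    have hL : HasDerivAt (fun w => f (t, w + ω₂ t))
        (deriv (fun w => f (t, w)) (z + ω₂ t) * 1) z :=
      HasDerivAt.comp (h₂ := fun w => f (t, w)) z ((hft _ hzω).hasDerivAt) ((hasDerivAt_id z).add_const (ω₂ t))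
    have hR : deriv (fun w => e * f (t, w)) z = e * deriv (fun w => f (t, w)) z := by
      rw [deriv_const_mul _ (hft z hz)]
    calc deriv (fun w => f (t, w)) (z + ω₂ t)
        = deriv (fun w => f (t, w + ω₂ t)) z := by rw [hL.deriv]; ring
      _ = deriv (fun w => e * f (t, w)) z := heq.deriv_eq
      _ = e * deriv (fun w => f (t, w)) z := hR
  have h2 : deriv (fun w => f (t, w)) (z + ω₂ t) ≠ 0 := by
    rw [h1]; exact mul_ne_zero hene hd
  refine ⟨h1, h2, ?_⟩
  set ω' := deriv ω₂ t with hω'def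
  have hω' : HasDerivAt ω₂ ω' t := (hω t).hasDerivAt
  -- partial derivatives via the total derivative
  have hpt : ∀ w : ℂ, HasDerivAt (fun s => f (s, w)) (fderiv ℝ f (t, w) (1, 0)) t := by
    intro w
    exact (hf (t, w)).hasFDerivAt.comp_hasDerivAt t
      ((hasDerivAt_id t).prodMk (hasDerivAt_const t w))
  -- z-direction slice of the total derivative
  have hpz : ∀ w ∈ U, ∀ v : ℂ,
      fderiv ℝ f (t, w) (0, v) = deriv (fun w' => f (t, w')) w * v := by
    intro w hw v
    have hD : HasFDerivAt f (fderiv ℝ f (t, w)) (t, w) := (hf (t, w)).hasFDerivAt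
    have hinr : HasFDerivAt (fun w' : ℂ => ((t : ℝ), w'))
        (ContinuousLinearMap.inr ℝ ℝ ℂ) w := hasFDerivAt_prodMk_right t w
    have hslice : HasFDerivAt (fun w' => f (t, w'))
        ((fderiv ℝ f (t, w)).comp (ContinuousLinearMap.inr ℝ ℝ ℂ)) w := hD.comp w hinr
    have hc : HasFDerivAt (fun w' => f (t, w'))
        (((ContinuousLinearMap.smulRight (1 : ℂ →L[ℂ] ℂ)
            (deriv (fun w' => f (t, w')) w))).restrictScalars ℝ) w :=
      ((hft w hw).hasDerivAt.hasFDerivAt).restrictScalars ℝ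
    have hu := hslice.unique hc
    have := congrFun (congrArg DFunLike.coe hu) v
    simpa [mul_comm] using this
  -- chain rule along s ↦ (s, z + ω₂ s)
  have hchain : HasDerivAt (fun s => f (s, z + ω₂ s))
      (fderiv ℝ f (t, z + ω₂ t) (1, ω')) t :=
    (hf (t, z + ω₂ t)).hasFDerivAt.comp_hasDerivAt t
      ((hasDerivAt_id t).prodMk (hω'.const_add z))
  have hrhs : HasDerivAt (fun s => e * f (s, z)) (e * fderiv ℝ f (t, z) (1, 0)) t :=
    (hpt z).const_mul e
  have hfun : (fun s => f (s, z + ω₂ s)) = fun s => e * f (s, z) := by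
    funext s; exact hper s z hz
  have hmain : fderiv ℝ f (t, z + ω₂ t) (1, ω') = e * fderiv ℝ f (t, z) (1, 0) := by
    have := hchain
    rw [hfun] at this
    exact this.unique hrhs
  have hsplit : fderiv ℝ f (t, z + ω₂ t) ((1 : ℝ), ω') =
      fderiv ℝ f (t, z + ω₂ t) (1, 0) + deriv (fun w' => f (t, w')) (z + ω₂ t) * ω' := by
    have : ((1 : ℝ), ω') = ((1 : ℝ), (0 : ℂ)) + ((0 : ℝ), ω') := by simp
    rw [this, map_add, hpz _ hzω ω']
  have hA : deriv (fun s => f (s, z + ω₂ t)) t = fderiv ℝ f (t, z + ω₂ t) (1, 0) :=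
    (hpt (z + ω₂ t)).deriv
  have hB : deriv (fun s => f (s, z)) t = fderiv ℝ f (t, z) (1, 0) := (hpt z).deriv
  have hkey : fderiv ℝ f (t, z + ω₂ t) (1, 0) =
      e * fderiv ℝ f (t, z) (1, 0) - deriv (fun w' => f (t, w')) (z + ω₂ t) * ω' := by
    rw [← hmain, hsplit]; ring
  rw [hA, hB, hkey, h1]
  field_simp
  ring
end
end

section
/- Let U ⊆ ℂ be open, let z₁ : ℝ → ℂ be differentiable with z₁(t) ∈ U, and let f : ℝ × U → ℂ be differentiable as a function of (t, z) ∈ ℝ × ℂ, holomorphic in z for each fixed t, and such that ∂_t f(t, ·) is continuous at z₁(t). Fix t ∈ ℝ and suppose ∂_z f(t, z₁(t)) = 0 and D(t) := ∂_z² f(t, z₁(t)) ≠ 0, while ∂_z f(t, z) ≠ 0 for z near z₁(t), z ≠ z₁(t). Set A(t) = f(t, z₁(t)). Then, with h(t, z) = ∂_t f(t, z)/∂_z f(t, z), the limit as z → z₁(t), z ≠ z₁(t), of (z − z₁(t))·h(t, z) exists and equals Ȧ(t)/D(t), where Ȧ(t) is the derivative of t ↦ A(t); i.e. h(t, ·)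 has a simple pole at z₁(t) with residue γ₁(t) = Ȧ(t)/D(t). -/
noncomputable section

open Complex Topology Filter

/-- At a moving critical point `z₁(t)` of `f(t, ·)`, the function `h(t,·) = ∂ₜf/∂_zf`
has a simple pole with residue `Ȧ(t)/D(t)`, where `A(t) = f(t, z₁(t))` and
`D(t) = ∂_z²f(t, z₁(t))`. -/
theorem stmt7 (U : Set ℂ) (hU : IsOpen U)
    (z₁ : ℝ → ℂ) (hz₁ : Differentiable ℝ z₁) (hz₁U : ∀ t : ℝ, z₁ t ∈ U)
    (f : ℝ × ℂ → ℂ) (hf : Differentiable ℝ f)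
    (hol : ∀ t : ℝ, DifferentiableOn ℂ (fun z => f (t, z)) U)
    (t : ℝ)
    (hcont : ContinuousAt (fun w => deriv (fun s => f (s, w)) t) (z₁ t))
    (hcrit : deriv (fun w => f (t, w)) (z₁ t) = 0)
    (hD : deriv (deriv (fun w => f (t, w))) (z₁ t) ≠ 0)
    (hne : ∀ᶠ z in 𝓝[≠] (z₁ t), deriv (fun w => f (t, w)) z ≠ 0) :
    Filter.Tendsto
      (fun z : ℂ => (z - z₁ t) *
        (deriv (fun s => f (s, z)) t / deriv (fun w => f (t, w)) z))
      (𝓝[≠] (z₁ t))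
      (𝓝 (deriv (fun s => f (s, z₁ s)) t / deriv (deriv (fun w => f (t, w))) (z₁ t))) := by
  have hmem : U ∈ 𝓝 (z₁ t) := hU.mem_nhds (hz₁U t)
  set g : ℂ → ℂ := fun w => f (t, w) with hg
  have hgU : DifferentiableOn ℂ g U := hol t
  have hgc : DifferentiableAt ℂ g (z₁ t) := hgU.differentiableAt hmem
  -- deriv g is analytic, hence differentiable, at z₁ t
  have hg'an : AnalyticOnNhd ℂ (deriv g) U := (hgU.analyticOnNhd hU).deriv
  have hD' : HasDerivAt (deriv g) (deriv (deriv g) (z₁ t)) (z₁ t) :=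
    ((hg'an (z₁ t) (hz₁U t)).differentiableAt).hasDerivAt
  have hslope : Tendsto (fun z => deriv g z / (z - z₁ t)) (𝓝[≠] (z₁ t))
      (𝓝 (deriv (deriv g) (z₁ t))) := by
    have h := hasDerivAt_iff_tendsto_slope.mp hD'
    have heq : (slope (deriv g) (z₁ t)) =ᶠ[𝓝[≠] (z₁ t)]
        fun z => deriv g z / (z - z₁ t) := by
      filter_upwards with z
      simp [slope_def_field, hcrit]
    exact h.congr' heq
  have hNum : Tendsto (fun z : ℂ => deriv (fun s => f (s, z)) t) (𝓝[≠] (z₁ t))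
      (𝓝 (deriv (fun s => f (s, z₁ t)) t)) :=
    hcont.tendsto.mono_left nhdsWithin_le_nhds
  have hmain : Tendsto
      (fun z : ℂ => (z - z₁ t) * (deriv (fun s => f (s, z)) t / deriv g z))
      (𝓝[≠] (z₁ t))
      (𝓝 (deriv (fun s => f (s, z₁ t)) t / deriv (deriv g) (z₁ t))) := by
    have := hNum.div hslope hD
    refine this.congr (fun z => ?_)
    simp only [Pi.div_apply]
    rw [div_div_eq_mul_div]
    ring
  -- chain rule: deriv of t ↦ f (t, z₁ t) equals the partial t-derivative
  have hA : deriv (fun s => f (s, z₁ s)) t = deriv (fun s => f (s, z₁ t)) t := by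
    set L := fderiv ℝ f (t, z₁ t) with hL
    have hfd : HasFDerivAt f L (t, z₁ t) := (hf (t, z₁ t)).hasFDerivAt
    have hcurve : HasDerivAt (fun s : ℝ => (s, z₁ s)) ((1 : ℝ), deriv z₁ t) t :=
      HasDerivAt.prodMk (hasDerivAt_id t) (hz₁ t).hasDerivAt
    have h1 : HasDerivAt (fun s => f (s, z₁ s)) (L (1, deriv z₁ t)) t :=
      hfd.comp_hasDerivAt t hcurve
    have hcurve2 : HasDerivAt (fun s : ℝ => (s, z₁ t)) ((1 : ℝ), (0 : ℂ)) t :=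
      HasDerivAt.prodMk (hasDerivAt_id t) (hasDerivAt_const t (z₁ t))
    have h2 : HasDerivAt (fun s => f (s, z₁ t)) (L (1, 0)) t :=
      hfd.comp_hasDerivAt t hcurve2
    have hzero : ∀ d : ℂ, L (0, d) = 0 := by
      intro d
      have hinc : HasFDerivAt (fun w : ℂ => ((t : ℝ), w))
          (((0 : ℂ →L[ℝ] ℝ)).prod (ContinuousLinearMap.id ℝ ℂ)) (z₁ t) :=
        HasFDerivAt.prodMk (hasFDerivAt_const t (z₁ t)) (hasFDerivAt_id (z₁ t))
      have hgR : HasFDerivAt g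
          (L.comp (((0 : ℂ →L[ℝ] ℝ)).prod (ContinuousLinearMap.id ℝ ℂ))) (z₁ t) :=
        hfd.comp (z₁ t) hinc
      have hg0 : HasFDerivAt g (0 : ℂ →L[ℝ] ℂ) (z₁ t) := by
        have := hgc.hasDerivAt
        rw [hcrit] at this
        have h0 : HasFDerivAt g (0 : ℂ →L[ℂ] ℂ) (z₁ t) :=
          this.hasFDerivAt.congr_fderiv (by ext; simp)
        simpa using h0.restrictScalars ℝ
      have huniq := hgR.unique hg0
      calc L (0, d) = (L.comp (((0 : ℂ →L[ℝ] ℝ)).prod (ContinuousLinearMap.id ℝ ℂ))) d := by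
            simp
        _ = 0 := by rw [huniq]; simp
    have hsplit : L (1, deriv z₁ t) = L (1, 0) := by
      have : ((1 : ℝ), deriv z₁ t) = ((1 : ℝ), (0 : ℂ)) + ((0 : ℝ), deriv z₁ t) := by
        simp
      rw [this, map_add, hzero, add_zero]
    rw [h1.deriv, h2.deriv, hsplit]
  rw [hA]
  exact hmain
end
end

section
/- Let U ⊆ ℂ be open, let z₀ : ℝ → ℂ and d : ℝ → ℂ∖{0} be differentiable with z₀(t) ∈ U, and let g : ℝ × U → ℂ be differentiable as a function of (t, z) ∈ ℝ × ℂ and holomorphic in z for each fixed t, with ∂_t g(t, ·) and ∂_z g(t, ·) continuous at z₀(t). Define, for z ∈ U ∖ {z₀(t)}, f(t, z) = d(t)/(z − z₀(t)) + g(t, z). Then for each fixed t, the function h(t, z) = ∂_t f(t, z)/∂_z f(t, z) has a removable singularity at z₀(t); more precisely, the limit as z → z₀(t), z ≠ z₀(t), of h(t, z) exists and equals −ż₀(t), where ż₀(t) is the derivative of t ↦ z₀(t). -/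
noncomputable section

open Complex Topology Filter

/-- At a moving simple pole `z₀(t)` with residue `d(t)`, the function
`h(t,·) = ∂ₜf/∂_zf` has a removable singularity with limit `-ż₀(t)`. -/
theorem stmt8 (U : Set ℂ) (hU : IsOpen U)
    (z₀ : ℝ → ℂ) (hz₀ : Differentiable ℝ z₀) (hz₀U : ∀ t : ℝ, z₀ t ∈ U)
    (d : ℝ → ℂ) (hd : Differentiable ℝ d) (hd0 : ∀ t : ℝ, d t ≠ 0)
    (g : ℝ × ℂ → ℂ) (hg : Differentiable ℝ g)
    (hol : ∀ t : ℝ, DifferentiableOn ℂ (fun z => g (t, z)) U)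
    (hct : ∀ t : ℝ, ContinuousAt (fun w => deriv (fun s => g (s, w)) t) (z₀ t))
    (hcz : ∀ t : ℝ, ContinuousAt (deriv (fun w => g (t, w))) (z₀ t)) :
    ∀ t : ℝ, Filter.Tendsto
      (fun z : ℂ =>
        deriv (fun s => d s / (z - z₀ s) + g (s, z)) t /
          deriv (fun w => d t / (w - z₀ t) + g (t, w)) z)
      (𝓝[≠] (z₀ t)) (𝓝 (-(deriv z₀ t))) := by
  intro t
  set N : ℂ → ℂ := fun z =>
    deriv d t * (z - z₀ t) + d t * deriv z₀ t +
      (z - z₀ t) ^ 2 * deriv (fun s => g (s, z)) t with hN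
  set D : ℂ → ℂ := fun z =>
    -(d t) + (z - z₀ t) ^ 2 * deriv (fun w => g (t, w)) z with hD
  have hNt : Tendsto N (𝓝[≠] (z₀ t)) (𝓝 (d t * deriv z₀ t)) := by
    have hc : ContinuousAt N (z₀ t) := by
      rw [hN]
      apply ContinuousAt.add
      · fun_prop
      · exact ContinuousAt.mul (by fun_prop) (hct t)
    have h0 : N (z₀ t) = d t * deriv z₀ t := by simp [hN]
    simpa [h0] using hc.tendsto.mono_left nhdsWithin_le_nhds
  have hDt : Tendsto D (𝓝[≠] (z₀ t)) (𝓝 (-(d t))) := by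
    have hc : ContinuousAt D (z₀ t) := by
      rw [hD]
      exact ContinuousAt.add continuousAt_const
        (ContinuousAt.mul (by fun_prop) (hcz t))
    have h0 : D (z₀ t) = -(d t) := by simp [hD]
    simpa [h0] using hc.tendsto.mono_left nhdsWithin_le_nhds
  have hlim : Tendsto (fun z => N z / D z) (𝓝[≠] (z₀ t)) (𝓝 (-(deriv z₀ t))) := by
    have h := hNt.div hDt (neg_ne_zero.mpr (hd0 t))
    have hval : d t * deriv z₀ t / -(d t) = -(deriv z₀ t) := by
      rw [div_neg, mul_comm, mul_div_assoc, div_self (hd0 t), mul_one]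
    rwa [hval] at h
  refine hlim.congr' ?_
  filter_upwards [mem_nhdsWithin_of_mem_nhds (hU.mem_nhds (hz₀U t)),
    self_mem_nhdsWithin] with z hzU hzne
  have hzne' : z ≠ z₀ t := hzne
  have hsub : z - z₀ t ≠ 0 := sub_ne_zero.mpr hzne'
  have h1 : HasDerivAt (fun s => d s / (z - z₀ s) + g (s, z))
      ((deriv d t * (z - z₀ t) - d t * (0 - deriv z₀ t)) / (z - z₀ t) ^ 2 +
        deriv (fun s => g (s, z)) t) t := by
    have hden : HasDerivAt (fun s => z - z₀ s) (0 - deriv z₀ t) t :=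
      (hasDerivAt_const t z).sub (hz₀ t).hasDerivAt
    have hq := ((hd t).hasDerivAt).div hden hsub
    have hgz : DifferentiableAt ℝ (fun s => g (s, z)) t :=
      (hg (t, z)).comp t (differentiableAt_id.prodMk (differentiableAt_const z))
    exact hq.add hgz.hasDerivAt
  have h2 : HasDerivAt (fun w => d t / (w - z₀ t) + g (t, w))
      ((0 * (z - z₀ t) - d t * 1) / (z - z₀ t) ^ 2 +
        deriv (fun w => g (t, w)) z) z := by
    have hden : HasDerivAt (fun w => w - z₀ t) 1 z := (hasDerivAt_id z).sub_const _
    have hq := (hasDerivAt_const z (d t)).div hden hsub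
    have hgz : HasDerivAt (fun w => g (t, w)) (deriv (fun w => g (t, w)) z) z :=
      ((hol t).differentiableAt (hU.mem_nhds hzU)).hasDerivAt
    exact hq.add hgz
  have c2 : ((z - z₀ t) ^ 2)⁻¹ ≠ 0 := inv_ne_zero (pow_ne_zero 2 hsub)
  have hT : deriv (fun s => d s / (z - z₀ s) + g (s, z)) t = N z * ((z - z₀ t) ^ 2)⁻¹ := by
    rw [h1.deriv, hN]
    field_simp
    ring
  have hZ : deriv (fun w => d t / (w - z₀ t) + g (t, w)) z = D z * ((z - z₀ t) ^ 2)⁻¹ := by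
    rw [h2.deriv, hD]
    field_simp
    ring
  rw [hT, hZ, mul_div_mul_right _ _ c2]
end
end

section
/- Let ω₁, ω₂ ∈ ℂ be linearly independent over ℝ, and let Ω = {mω₁ + nω₂ : m, n ∈ ℤ}. Then for every z ∈ ℂ ∖ Ω, the family indexed by the nonzero lattice points ω ∈ Ω∖{0} with terms 1/(z − ω) + 1/ω + z/ω² is (absolutely) summable; hence the Weierstrass zeta function ζ(z) = 1/z + ∑_{ω ∈ Ω∖{0}} [1/(z−ω) + 1/ω + z/ω²] is well defined on ℂ ∖ Ω. -/
noncomputable section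

open Complex Topology Filter

lemma latPt_bound (ω₁ ω₂ : ℂ) (hind : LinearIndependent ℝ ![ω₁, ω₂]) :
    ∃ c > 0, ∀ p : ℤ × ℤ, c * ‖p‖ ≤ ‖latPt ω₁ ω₂ p‖ := by
  have hcard : Fintype.card (Fin 2) = Module.finrank ℝ ℂ := by
    simp [Complex.finrank_real_complex]
  let b := basisOfLinearIndependentOfCardEqFinrank hind hcard
  have hK := b.equivFunL.symm.antilipschitz
  set K := ‖(b.equivFunL.symm.symm : ℂ →L[ℝ] (Fin 2 → ℝ))‖₊ with hKdef
  refine ⟨((K : ℝ) + 1)⁻¹, by positivity, fun p => ?_⟩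
  have hx : b.equivFunL.symm ![(p.1 : ℝ), (p.2 : ℝ)] = latPt ω₁ ω₂ p := by
    show b.equivFun.symm _ = _
    rw [Module.Basis.equivFun_symm_apply]
    simp [b, Fin.sum_univ_two, latPt, Complex.real_smul]
  have h1 : ‖(![(p.1 : ℝ), (p.2 : ℝ)] : Fin 2 → ℝ)‖ ≤ (K : ℝ) * ‖latPt ω₁ ω₂ p‖ := by
    have := (b.equivFunL.symm : (Fin 2 → ℝ) →L[ℝ] ℂ).bound_of_antilipschitz hK
      ![(p.1 : ℝ), (p.2 : ℝ)]
    simpa [hx] using this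
  have h2 : ‖p‖ ≤ ‖(![(p.1 : ℝ), (p.2 : ℝ)] : Fin 2 → ℝ)‖ := by
    rw [Prod.norm_def]
    refine max_le ?_ ?_
    · simpa [Int.norm_cast_real, Int.norm_eq_abs] using norm_le_pi_norm (![(p.1 : ℝ), (p.2 : ℝ)]) 0
    · simpa [Int.norm_cast_real, Int.norm_eq_abs] using norm_le_pi_norm (![(p.1 : ℝ), (p.2 : ℝ)]) 1
  rw [inv_mul_le_iff₀ (by positivity)]
  calc ‖p‖ ≤ (K:ℝ) * ‖latPt ω₁ ω₂ p‖ := h2.trans h1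
    _ ≤ ((K:ℝ)+1) * ‖latPt ω₁ ω₂ p‖ := by nlinarith [norm_nonneg (latPt ω₁ ω₂ p)]

lemma summable_cube : Summable fun p : ℤ × ℤ => (‖p‖ ^ 3)⁻¹ := by
  have h := EisensteinSeries.summable_one_div_norm_rpow (k := 3) (by norm_num)
  refine ((finTwoArrowEquiv ℤ).summable_iff).mp (h.congr fun x => Eq.symm ?_)
  have hn : ‖(finTwoArrowEquiv ℤ) x‖ = ‖x‖ := by
    rw [Prod.norm_def, EisensteinSeries.norm_eq_max_natAbs]
    simp [finTwoArrowEquiv, Int.norm_eq_abs, Nat.cast_natAbs, Nat.cast_max]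
  show (‖(finTwoArrowEquiv ℤ) x‖ ^ 3)⁻¹ = ‖x‖ ^ (-3 : ℝ)
  rw [hn, Real.rpow_neg (norm_nonneg x), ← Real.rpow_natCast ‖x‖ 3]
  norm_num


/-- The family defining the Weierstrass zeta function is (absolutely) summable, so `ζ`
is well defined off the lattice. -/
theorem stmt16 (ω₁ ω₂ : ℂ) (hind : LinearIndependent ℝ ![ω₁, ω₂]) (z : ℂ)
    (hz : z ∉ lattice ω₁ ω₂) :
    Summable (fun p : {p : ℤ × ℤ // p ≠ 0} =>
      (z - latPt ω₁ ω₂ p.1)⁻¹ + (latPt ω₁ ω₂ p.1)⁻¹ + z / (latPt ω₁ ω₂ p.1) ^ 2) := by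
  obtain ⟨c, hc, hbd⟩ := latPt_bound ω₁ ω₂ hind
  have hω : ∀ p : ℤ × ℤ, p ≠ 0 → latPt ω₁ ω₂ p ≠ 0 := by
    intro p hp h0
    have := hbd p
    rw [h0, norm_zero] at this
    have : ‖p‖ ≤ 0 := by nlinarith
    exact hp (norm_le_zero_iff.mp this)
  have hzω : ∀ p : ℤ × ℤ, z - latPt ω₁ ω₂ p ≠ 0 := by
    intro p h0
    exact hz ⟨p.1, p.2, by rw [sub_eq_zero] at h0; exact h0⟩
  -- the summable majorant
  have hsum : Summable fun p : {p : ℤ × ℤ // p ≠ 0} =>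
      2 * ‖z‖ ^ 2 * (c ^ 3)⁻¹ * (‖p.1‖ ^ 3)⁻¹ :=
    ((summable_cube.mul_left _).subtype _)
  refine Summable.of_norm_bounded_eventually hsum ?_
  -- eventually in cofinite, ‖latPt p‖ ≥ 2 ‖z‖
  have htend : Tendsto (fun p : ℤ × ℤ => ‖p‖) cofinite atTop := by
    rw [← cocompact_eq_cofinite]
    exact tendsto_norm_cocompact_atTop
  have hev : ∀ᶠ p : ℤ × ℤ in cofinite, 2 * ‖z‖ ≤ c * ‖p‖ := by
    filter_upwards [htend.eventually_ge_atTop (2 * ‖z‖ / c)] with p hp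
    rw [div_le_iff₀ hc] at hp
    linarith [mul_comm c ‖p‖, hp]
  rw [eventually_cofinite] at hev ⊢
  apply Set.Finite.subset (Set.Finite.preimage (Set.injOn_of_injective Subtype.val_injective) hev)
  intro p hp
  simp only [Set.mem_preimage, Set.mem_setOf_eq]
  intro hple
  apply hp
  -- now the actual estimate, knowing 2‖z‖ ≤ c‖p‖ ≤ ‖ω‖
  obtain ⟨q, hq⟩ := p
  simp only at hple ⊢
  set ω := latPt ω₁ ω₂ q with hωdef
  have hων : 2 * ‖z‖ ≤ ‖ω‖ := le_trans hple (hbd q)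
  have hω0 : ω ≠ 0 := hω q hq
  have hzω0 : z - ω ≠ 0 := hzω q
  have hid : (z - ω)⁻¹ + ω⁻¹ + z / ω ^ 2 = z ^ 2 / (ω ^ 2 * (z - ω)) := by
    field_simp
    ring
  rw [hid]
  have hhalf : ‖ω‖ / 2 ≤ ‖z - ω‖ := by
    have := norm_sub_norm_le ω z
    rw [norm_sub_rev] at this
    linarith
  have hωpos : 0 < ‖ω‖ := norm_pos_iff.mpr hω0
  have hzωpos : 0 < ‖z - ω‖ := norm_pos_iff.mpr hzω0
  rw [norm_div, norm_mul, norm_pow, norm_pow]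
  have hcp : c * ‖q‖ ≤ ‖ω‖ := hbd q
  have hqpos : 0 < ‖q‖ := by
    rcases (norm_nonneg q).lt_or_eq with h | h
    · exact h
    · exact absurd (norm_le_zero_iff.mp h.ge) hq
  have key : ‖z‖ ^ 2 / (‖ω‖ ^ 2 * ‖z - ω‖) ≤ 2 * ‖z‖ ^ 2 / ‖ω‖ ^ 3 := by
    rw [div_le_div_iff₀ (by positivity) (by positivity)]
    have : ‖ω‖ ^ 3 ≤ 2 * (‖ω‖ ^ 2 * ‖z - ω‖) := by nlinarith
    nlinarith [sq_nonneg ‖z‖]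
  refine key.trans ?_
  rw [mul_assoc (2 * ‖z‖ ^ 2), div_le_iff₀ (by positivity), mul_assoc]
  have h3 : c ^ 3 * ‖q‖ ^ 3 ≤ ‖ω‖ ^ 3 := by
    rw [← mul_pow]
    exact pow_le_pow_left₀ (by positivity) hcp 3
  rw [← mul_inv]
  have : (‖ω‖ ^ 3)⁻¹ ≤ (c ^ 3 * ‖q‖ ^ 3)⁻¹ := by
    apply inv_anti₀ (by positivity) h3
  calc 2 * ‖z‖ ^ 2 = 2 * ‖z‖ ^ 2 * ((‖ω‖^3)⁻¹ * ‖ω‖^3) := by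
        rw [inv_mul_cancel₀ (by positivity), mul_one]
    _ ≤ 2 * ‖z‖ ^ 2 * ((c ^ 3 * ‖q‖ ^ 3)⁻¹ * ‖ω‖ ^ 3) := by
        apply mul_le_mul_of_nonneg_left (mul_le_mul_of_nonneg_right this (by positivity)) (by positivity)
end
end

section
/- Let ω₁, ω₂ ∈ ℂ be linearly independent over ℝ, and let Ω = {mω₁ + nω₂ : m, n ∈ ℤ}. Then for every z ∈ ℂ, the family indexed by the nonzero lattice points ω ∈ Ω∖{0} with factors (1 − z/ω) exp(z/ω + z²/(2ω²)) is multipliable (the infinite product converges unconditionally); hence the Weierstrass sigma function σ(z) = z ∏_{ω ∈ Ω∖{0}} (1 − z/ω) exp(z/ω + z²/(2ω²)) is well defined for all z ∈ ℂ, and σ(z) = 0 if and only if z ∈ Ω. -/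
noncomputable section

open Complex Topology Filter

namespace Stmt17Aux

/-- The real-linear map `(x, y) ↦ x • ω₁ + y • ω₂`. -/
def T (ω₁ ω₂ : ℂ) : (ℝ × ℝ) →ₗ[ℝ] ℂ where
  toFun x := x.1 • ω₁ + x.2 • ω₂
  map_add' a b := by simp [add_smul]; abel
  map_smul' c a := by simp [mul_smul, smul_add]

lemma T_apply (ω₁ ω₂ : ℂ) (x : ℝ × ℝ) : T ω₁ ω₂ x = x.1 • ω₁ + x.2 • ω₂ := rfl

lemma T_inj {ω₁ ω₂ : ℂ} (hind : LinearIndependent ℝ ![ω₁, ω₂]) :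
    Function.Injective (T ω₁ ω₂) := by
  rw [injective_iff_map_eq_zero]
  intro a ha
  obtain ⟨h1, h2⟩ := LinearIndependent.pair_iff.mp hind a.1 a.2 ha
  exact Prod.ext h1 h2

lemma T_latPt (ω₁ ω₂ : ℂ) (p : ℤ × ℤ) :
    T ω₁ ω₂ ((p.1 : ℝ), (p.2 : ℝ)) = latPt ω₁ ω₂ p := by
  simp [T_apply, latPt, Complex.real_smul]

/-- `max |m| |n|` as a real number. -/
def N (p : ℤ × ℤ) : ℝ := max |(p.1 : ℝ)| |(p.2 : ℝ)|

lemma one_le_N {p : ℤ × ℤ} (hp : p ≠ 0) : 1 ≤ N p := by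
  have : p.1 ≠ 0 ∨ p.2 ≠ 0 := by
    by_contra hc
    push_neg at hc
    exact hp (Prod.ext hc.1 hc.2)
  rcases this with h | h
  · refine le_max_of_le_left ?_
    have := Int.one_le_abs h
    calc (1 : ℝ) = ((1 : ℤ) : ℝ) := by norm_num
    _ ≤ ((|p.1| : ℤ) : ℝ) := by exact_mod_cast this
    _ = |(p.1 : ℝ)| := by push_cast; ring
  · refine le_max_of_le_right ?_
    have := Int.one_le_abs h
    calc (1 : ℝ) = ((1 : ℤ) : ℝ) := by norm_num
    _ ≤ ((|p.2| : ℤ) : ℝ) := by exact_mod_cast this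
    _ = |(p.2 : ℝ)| := by push_cast; ring

lemma exists_bound {ω₁ ω₂ : ℂ} (hind : LinearIndependent ℝ ![ω₁, ω₂]) :
    ∃ K : ℝ, 0 < K ∧ ∀ p : ℤ × ℤ, N p ≤ K * ‖latPt ω₁ ω₂ p‖ := by
  obtain ⟨K, hK, hanti⟩ := (LinearMap.injective_iff_antilipschitz (T ω₁ ω₂)).mp (T_inj hind)
  refine ⟨K, hK, fun p => ?_⟩
  have := hanti.le_mul_dist ((p.1 : ℝ), (p.2 : ℝ)) 0
  rw [map_zero, dist_zero_right, dist_zero_right, T_latPt] at this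
  have hnorm : ‖((p.1 : ℝ), (p.2 : ℝ))‖ = N p := by
    simp [Prod.norm_def, N, Real.norm_eq_abs]
  rw [hnorm] at this
  exact this

lemma latPt_ne_zero {ω₁ ω₂ : ℂ} (hind : LinearIndependent ℝ ![ω₁, ω₂])
    {p : ℤ × ℤ} (hp : p ≠ 0) : latPt ω₁ ω₂ p ≠ 0 := by
  intro h
  have := T_latPt ω₁ ω₂ p
  rw [h] at this
  have h0 : ((p.1 : ℝ), (p.2 : ℝ)) = (0 : ℝ × ℝ) := T_inj hind (by rw [this, map_zero])
  apply hp
  have h1 : (p.1 : ℝ) = 0 := congrArg Prod.fst h0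
  have h2 : (p.2 : ℝ) = 0 := congrArg Prod.snd h0
  exact Prod.ext (by exact_mod_cast h1) (by exact_mod_cast h2)

lemma eventually_big {ω₁ ω₂ : ℂ} (hind : LinearIndependent ℝ ![ω₁, ω₂]) (R : ℝ) :
    ∀ᶠ p : {p : ℤ × ℤ // p ≠ 0} in cofinite, R ≤ ‖latPt ω₁ ω₂ p.1‖ := by
  obtain ⟨K, hK, hb⟩ := exists_bound hind
  rw [eventually_cofinite]
  set M : ℤ := ⌈K * R⌉ with hM
  have hsub : {p : {p : ℤ × ℤ // p ≠ 0} | ¬ R ≤ ‖latPt ω₁ ω₂ p.1‖} ⊆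
      (fun p : {p : ℤ × ℤ // p ≠ 0} => p.1) ⁻¹' (Set.Icc ((-M, -M) : ℤ × ℤ) (M, M)) := by
    intro p hp
    rw [Set.mem_setOf_eq, not_le] at hp
    have h1 : N p.1 ≤ K * ‖latPt ω₁ ω₂ p.1‖ := hb p.1
    have h2 : K * ‖latPt ω₁ ω₂ p.1‖ ≤ K * R := by
      apply mul_le_mul_of_nonneg_left (le_of_lt hp) (le_of_lt hK)
    have h3 : N p.1 ≤ (M : ℝ) := (h1.trans h2).trans (Int.le_ceil _)
    have ha : |(p.1.1 : ℝ)| ≤ (M : ℝ) := (le_max_left _ _).trans h3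
    have hb' : |(p.1.2 : ℝ)| ≤ (M : ℝ) := (le_max_right _ _).trans h3
    have ha' : |p.1.1| ≤ M := by exact_mod_cast (by push_cast at ha ⊢; exact ha : ((|p.1.1| : ℤ) : ℝ) ≤ (M : ℝ))
    have hb'' : |p.1.2| ≤ M := by exact_mod_cast (by push_cast at hb' ⊢; exact hb' : ((|p.1.2| : ℤ) : ℝ) ≤ (M : ℝ))
    rw [abs_le] at ha' hb''
    exact ⟨⟨ha'.1, hb''.1⟩, ⟨ha'.2, hb''.2⟩⟩
  exact Set.Finite.subset ((Set.finite_Icc _ _).preimage (Subtype.val_injective.injOn)) hsub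

lemma summable_N : Summable (fun p : {p : ℤ × ℤ // p ≠ 0} => (N p.1 ^ 3)⁻¹) := by
  have base : Summable fun x : Fin 2 → ℤ => ‖x‖ ^ (-3 : ℝ) :=
    EisensteinSeries.summable_one_div_norm_rpow (by norm_num)
  have base2 : Summable fun p : ℤ × ℤ => ‖(finTwoArrowEquiv ℤ).symm p‖ ^ (-3 : ℝ) :=
    ((finTwoArrowEquiv ℤ).symm.summable_iff).mpr base
  have base3 : Summable fun p : {p : ℤ × ℤ // p ≠ 0} =>
      ‖(finTwoArrowEquiv ℤ).symm p.1‖ ^ (-3 : ℝ) := base2.subtype _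
  apply base3.congr
  intro p
  have hnorm : ‖(finTwoArrowEquiv ℤ).symm p.1‖ = N p.1 := by
    rw [finTwoArrowEquiv_symm_apply, EisensteinSeries.norm_eq_max_natAbs]
    simp only [Matrix.cons_val_zero, Matrix.cons_val_one, Matrix.head_cons, N]
    rw [Nat.cast_max]
    congr 1 <;> rw [Nat.cast_natAbs] <;> push_cast <;> ring
  rw [hnorm]
  have h1 : (1 : ℝ) ≤ N p.1 := one_le_N p.2
  have h0 : (0 : ℝ) < N p.1 := lt_of_lt_of_le zero_lt_one h1
  rw [Real.rpow_neg h0.le]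
  congr 1
  rw [show (3 : ℝ) = ((3 : ℕ) : ℝ) by norm_num, Real.rpow_natCast]

lemma summable_inv_cube {ω₁ ω₂ : ℂ} (hind : LinearIndependent ℝ ![ω₁, ω₂]) :
    Summable (fun p : {p : ℤ × ℤ // p ≠ 0} => (‖latPt ω₁ ω₂ p.1‖ ^ 3)⁻¹) := by
  obtain ⟨K, hK, hb⟩ := exists_bound hind
  refine Summable.of_nonneg_of_le (fun p => by positivity) (fun p => ?_)
    (summable_N.mul_left (K ^ 3))
  have h1 : (1 : ℝ) ≤ N p.1 := one_le_N p.2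
  have hN : (0 : ℝ) < N p.1 := lt_of_lt_of_le zero_lt_one h1
  have hL : (0 : ℝ) < ‖latPt ω₁ ω₂ p.1‖ :=
    norm_pos_iff.mpr (latPt_ne_zero hind p.2)
  have hcube : N p.1 ^ 3 ≤ (K * ‖latPt ω₁ ω₂ p.1‖) ^ 3 :=
    pow_le_pow_left₀ hN.le (hb p.1) 3
  have hinv : ((K * ‖latPt ω₁ ω₂ p.1‖) ^ 3)⁻¹ ≤ (N p.1 ^ 3)⁻¹ := by
    apply inv_anti₀ (by positivity) hcube
  calc (‖latPt ω₁ ω₂ p.1‖ ^ 3)⁻¹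
      = K ^ 3 * ((K * ‖latPt ω₁ ω₂ p.1‖) ^ 3)⁻¹ := by
        rw [mul_pow, mul_inv, ← mul_assoc, mul_inv_cancel₀ (by positivity : (K:ℝ) ^ 3 ≠ 0), one_mul]
    _ ≤ K ^ 3 * (N p.1 ^ 3)⁻¹ := by
        apply mul_le_mul_of_nonneg_left hinv (by positivity)

/-- The key analytic estimate: for `‖ω‖` large, the sigma factor is `exp u` with
`u` explicitly bounded, and its log equals `u`. -/
lemma norm_log_le (z : ℂ) {ω : ℂ} (hω : max 1 (2 * ‖z‖) ≤ ‖ω‖) :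
    ‖Complex.log ((1 - z / ω) * Complex.exp (z / ω + z ^ 2 / (2 * ω ^ 2)))‖
      ≤ 2 * ‖z‖ ^ 3 * (‖ω‖ ^ 3)⁻¹ := by
  have hω1 : (1 : ℝ) ≤ ‖ω‖ := (le_max_left _ _).trans hω
  have hω0 : ω ≠ 0 := by
    intro h; rw [h, norm_zero] at hω1; linarith
  have hωpos : (0 : ℝ) < ‖ω‖ := lt_of_lt_of_le zero_lt_one hω1
  set w := z / ω with hwdef
  have hw : ‖w‖ ≤ 1 / 2 := by
    rw [hwdef, norm_div, div_le_iff₀ hωpos]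
    have := (le_max_right 1 (2 * ‖z‖)).trans hω
    linarith
  have hw0 : (0 : ℝ) ≤ ‖w‖ := norm_nonneg _
  set u := Complex.log (1 - w) + w + w ^ 2 / 2 with hudef
  -- bound on u
  have hu : ‖u‖ ≤ ‖w‖ ^ 3 := by
    have hlt : ‖-w‖ < 1 := by rw [norm_neg]; linarith
    have hb := Complex.norm_log_sub_logTaylor_le 2 hlt
    have hlogT : Complex.logTaylor 3 (-w) = -w - w ^ 2 / 2 := by
      simp [Complex.logTaylor, Finset.sum_range_succ]
      ring
    have heq : Complex.log (1 + -w) - Complex.logTaylor 3 (-w) = u := by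
      rw [hlogT, hudef]
      have : (1 : ℂ) + -w = 1 - w := by ring
      rw [this]; ring
    rw [heq] at hb
    rw [norm_neg] at hb
    have hinv : (1 - ‖w‖)⁻¹ ≤ 2 := by
      have h2 : (1 : ℝ) / 2 ≤ 1 - ‖w‖ := by linarith
      calc (1 - ‖w‖)⁻¹ ≤ ((1:ℝ)/2)⁻¹ := inv_anti₀ (by norm_num) h2
        _ = 2 := by norm_num
    have : ‖w‖ ^ (2 + 1) * (1 - ‖w‖)⁻¹ / (2 + 1) ≤ ‖w‖ ^ 3 := by
      have hw3 : (0:ℝ) ≤ ‖w‖ ^ 3 := by positivity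
      have : ‖w‖ ^ (2 + 1) * (1 - ‖w‖)⁻¹ ≤ ‖w‖ ^ 3 * 2 := by
        norm_num
        exact mul_le_mul_of_nonneg_left hinv (by positivity)
      linarith
    calc ‖u‖ ≤ ‖w‖ ^ (2 + 1) * (1 - ‖w‖)⁻¹ / (2 + 1) := by exact_mod_cast hb
      _ ≤ ‖w‖ ^ 3 := this
  have hu8 : ‖u‖ ≤ 1 / 8 := by
    have : ‖w‖ ^ 3 ≤ (1/2 : ℝ) ^ 3 := pow_le_pow_left₀ hw0 hw 3
    calc ‖u‖ ≤ ‖w‖ ^ 3 := hu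
      _ ≤ (1/2 : ℝ) ^ 3 := this
      _ = 1 / 8 := by norm_num
  -- the factor equals exp u
  have h1w : (1 : ℂ) - w ≠ 0 := by
    intro h
    have : w = 1 := by linear_combination -h
    rw [this, norm_one] at hw; linarith
  have harg : z / ω + z ^ 2 / (2 * ω ^ 2) = w + w ^ 2 / 2 := by
    rw [hwdef]; field_simp
  have hfac : (1 - z / ω) * Complex.exp (z / ω + z ^ 2 / (2 * ω ^ 2)) = Complex.exp u := by
    rw [harg, ← hwdef, hudef]
    conv_lhs => rw [← Complex.exp_log h1w]
    rw [← Complex.exp_add]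
    congr 1
    ring
  have hlog : Complex.log ((1 - z / ω) * Complex.exp (z / ω + z ^ 2 / (2 * ω ^ 2))) = u := by
    rw [hfac]
    apply Complex.log_exp
    · have : |u.im| ≤ ‖u‖ := Complex.abs_im_le_norm u
      have hpi := Real.pi_gt_three
      have := abs_le.mp (this.trans hu8)
      linarith
    · have : |u.im| ≤ ‖u‖ := Complex.abs_im_le_norm u
      have hpi := Real.pi_gt_three
      have := abs_le.mp (this.trans hu8)
      linarith
  rw [hlog]
  calc ‖u‖ ≤ ‖w‖ ^ 3 := hu
    _ = ‖z‖ ^ 3 * (‖ω‖ ^ 3)⁻¹ := by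
        rw [hwdef, norm_div, div_pow, div_eq_mul_inv]
    _ ≤ 2 * ‖z‖ ^ 3 * (‖ω‖ ^ 3)⁻¹ := by
        have : (0:ℝ) ≤ ‖z‖ ^ 3 * (‖ω‖ ^ 3)⁻¹ := by positivity
        linarith

/-- The sigma factor. -/
def F (ω₁ ω₂ z : ℂ) (p : {p : ℤ × ℤ // p ≠ 0}) : ℂ :=
  (1 - z / latPt ω₁ ω₂ p.1) *
    Complex.exp (z / latPt ω₁ ω₂ p.1 + z ^ 2 / (2 * (latPt ω₁ ω₂ p.1) ^ 2))

end Stmt17Aux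

set_option maxHeartbeats 1000000 in
open Stmt17Aux in
/-- The family defining the Weierstrass sigma function is multipliable, so `σ` is well
defined on all of `ℂ`, and it vanishes exactly on the lattice. -/
theorem stmt17 (ω₁ ω₂ : ℂ) (hind : LinearIndependent ℝ ![ω₁, ω₂]) :
    (∀ z : ℂ, Multipliable (fun p : {p : ℤ × ℤ // p ≠ 0} =>
      (1 - z / latPt ω₁ ω₂ p.1) *
        Complex.exp (z / latPt ω₁ ω₂ p.1 + z ^ 2 / (2 * (latPt ω₁ ω₂ p.1) ^ 2)))) ∧
    ∀ z : ℂ, (wsigma ω₁ ω₂ z = 0 ↔ z ∈ lattice ω₁ ω₂) := by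
  have hf : ∀ z p, F ω₁ ω₂ z p = (1 - z / latPt ω₁ ω₂ p.1) *
      Complex.exp (z / latPt ω₁ ω₂ p.1 + z ^ 2 / (2 * (latPt ω₁ ω₂ p.1) ^ 2)) :=
    fun _ _ => rfl
  -- summability of the logs
  have hsum : ∀ z : ℂ, Summable (fun p : {p : ℤ × ℤ // p ≠ 0} => Complex.log (F ω₁ ω₂ z p)) := by
    intro z
    have hg : Summable (fun p : {p : ℤ × ℤ // p ≠ 0} =>
        2 * ‖z‖ ^ 3 * (‖latPt ω₁ ω₂ p.1‖ ^ 3)⁻¹) :=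
      (summable_inv_cube hind).mul_left _
    refine Summable.of_norm_bounded_eventually hg ?_
    filter_upwards [eventually_big hind (max 1 (2 * ‖z‖))] with p hp
    exact norm_log_le z hp
  -- case of a vanishing factor
  have hzero : ∀ z : ℂ, ∀ p₀ : {p : ℤ × ℤ // p ≠ 0}, latPt ω₁ ω₂ p₀.1 = z →
      HasProd (F ω₁ ω₂ z) 0 := by
    intro z p₀ hp₀
    have hfp₀ : F ω₁ ω₂ z p₀ = 0 := by
      rw [hf _ _]
      have hω0 : latPt ω₁ ω₂ p₀.1 ≠ 0 := latPt_ne_zero hind p₀.2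
      have : 1 - z / latPt ω₁ ω₂ p₀.1 = 0 := by
        rw [← hp₀, div_self hω0, sub_self]
      simp only [this, zero_mul]
    have hev : ∀ᶠ s : Finset {p : ℤ × ℤ // p ≠ 0} in atTop, ∏ p ∈ s, F ω₁ ω₂ z p = 0 := by
      filter_upwards [eventually_ge_atTop ({p₀} : Finset _)] with s hs
      exact Finset.prod_eq_zero (hs (Finset.mem_singleton_self p₀)) hfp₀
    exact Tendsto.congr' (hev.mono fun s hs => hs.symm) tendsto_const_nhds
  -- case of no vanishing factor
  have hnonzero : ∀ z : ℂ, (∀ p : {p : ℤ × ℤ // p ≠ 0}, latPt ω₁ ω₂ p.1 ≠ z) →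
      (∀ p : {p : ℤ × ℤ // p ≠ 0}, F ω₁ ω₂ z p ≠ 0) := by
    intro z hz p
    rw [hf _ _]
    apply mul_ne_zero _ (Complex.exp_ne_zero _)
    intro h
    have hω0 : latPt ω₁ ω₂ p.1 ≠ 0 := latPt_ne_zero hind p.2
    have : z / latPt ω₁ ω₂ p.1 = 1 := by linear_combination -h
    rw [div_eq_one_iff_eq hω0] at this
    exact hz p this.symm
  have hmult : ∀ z : ℂ, Multipliable (F ω₁ ω₂ z) := by
    intro z
    by_cases hz : ∃ p₀ : {p : ℤ × ℤ // p ≠ 0}, latPt ω₁ ω₂ p₀.1 = z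
    · obtain ⟨p₀, hp₀⟩ := hz
      exact ⟨0, hzero z p₀ hp₀⟩
    · push_neg at hz
      exact Complex.multipliable_of_summable_log (hsum z)
  refine ⟨hmult, fun z => ?_⟩
  have hws : wsigma ω₁ ω₂ z = z * ∏' p, F ω₁ ω₂ z p := rfl
  rw [hws]
  constructor
  · intro h
    rcases mul_eq_zero.mp h with h | h
    · exact ⟨0, 0, by simp [h]⟩
    · -- the infinite product vanishes, so some factor vanishes
      by_contra hz
      have hz' : ∀ p : {p : ℤ × ℤ // p ≠ 0}, latPt ω₁ ω₂ p.1 ≠ z := by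
        intro p hp
        exact hz ⟨p.1.1, p.1.2, by rw [← hp, latPt]⟩
      have key := Complex.cexp_tsum_eq_tprod (hnonzero z hz') (hsum z)
      rw [← key] at h
      exact Complex.exp_ne_zero _ h
  · rintro ⟨m, n, hmn⟩
    by_cases hz0 : z = 0
    · rw [hz0, zero_mul]
    · have hmn0 : (m, n) ≠ (0 : ℤ × ℤ) := by
        intro h
        apply hz0
        rw [hmn, show m = 0 from congrArg Prod.fst h, show n = 0 from congrArg Prod.snd h]
        simp
      set p₀ : {p : ℤ × ℤ // p ≠ 0} := ⟨(m, n), hmn0⟩ with hp₀def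
      have hp₀ : latPt ω₁ ω₂ p₀.1 = z := by rw [hmn, latPt]
      rw [(hzero z p₀ hp₀).tprod_eq, mul_zero]
end
end
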